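/- arXiv:1212.5517 — 2 statements merged into one kernel-verified Lean document; each statement's English description precedes it below -/
import Mathlib

section
/- For every α ∈ (0,1), lim_{s→0⁺} ℓ^α(s) = √(−2 ln α), where ℓ^α(s) is the unique solution in ℓ of J(s,ℓ) = α. -/
open Real Set Filter Topology

noncomputable def Phi (x : ℝ) : ℝ :=
  (Real.sqrt (2 * Real.pi))⁻¹ * ∫ y in Set.Iic x, Real.exp (-y ^ 2 / 2)

noncomputable def J (s ℓ : ℝ) : ℝ :=
  Phi (-ℓ / (2 * Real.sqrt s)) +
    Real.exp (ℓ ^ 2 * (s - 1) / 2) * Phi (ℓ * (1 / (2 * Real.sqrt s) - Real.sqrt s))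

/-!
For `0 < s < 1` the map `ℓ ↦ J(s,ℓ)` is strictly decreasing on `(0,∞)`: in its derivative the two
Gaussian-density terms collapse, via `e^{ℓ²(s−1)/2} φ(ℓ(1/(2√s) − √s)) = φ(ℓ/(2√s))`, to
`−√s φ(ℓ/(2√s))`, and the remaining term has the sign of `s − 1`. As `s → 0⁺`, `J(s,ℓ) → e^{−ℓ²/2}`,
which equals `α` exactly at `ℓ = √(−2 ln α)`. For `a < √(−2 ln α) < b` we eventually have
`J(s,b) < α < J(s,a)`, so monotonicity traps the root `ℓ^α(s)` in `(a, b)`.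
-/

open MeasureTheory ProbabilityTheory

section RootConvergence

variable {ι α β : Type*} [LinearOrder α] [TopologicalSpace α] [OrderTopology α]
  [LinearOrder β] [TopologicalSpace β] [OrderTopology β]

theorem tendsto_root_of_strictAntiOn {l : Filter ι} {f : ι → α → β} {g : α → β}
    {x : ι → α} {p x₀ : α} {c : β} (hp : p ≤ x₀)
    (hanti : ∀ᶠ i in l, StrictAntiOn (f i) (Ioi p))
    (hlim : ∀ y, p < y → Tendsto (fun i => f i y) l (𝓝 (g y)))
    (hroot : ∀ᶠ i in l, p < x i ∧ f i (x i) = c)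
    (hlt : ∀ y ∈ Ioo p x₀, c < g y) (hgt : ∀ y, x₀ < y → g y < c) :
    Tendsto x l (𝓝 x₀) := by
  refine tendsto_order.2 ⟨fun a ha => ?_, fun b hb => ?_⟩
  · rcases le_or_gt a p with hap | hpa
    · filter_upwards [hroot] with i hi using hap.trans_lt hi.1
    · filter_upwards [hanti, hroot, (hlim a hpa).eventually (lt_mem_nhds (hlt a ⟨hpa, ha⟩))]
        with i hi hxi hca
      exact (hi.lt_iff_gt hxi.1 hpa).1 (hxi.2 ▸ hca)
  · have hpb : p < b := hp.trans_lt hb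
    filter_upwards [hanti, hroot, (hlim b hpb).eventually (gt_mem_nhds (hgt b hb))]
      with i hi hxi hbc
    exact (hi.lt_iff_gt hpb hxi.1).1 (hxi.2 ▸ hbc)

end RootConvergence

theorem hasDerivAt_integral_Iic {E : Type*} [NormedAddCommGroup E] [NormedSpace ℝ E]
    [CompleteSpace E] {f : ℝ → E} (hf : Continuous f) (hfi : Integrable f) (x : ℝ) :
    HasDerivAt (fun x => ∫ y in Iic x, f y) (f x) x := by
  have hsplit :
      (fun x => ∫ y in Iic x, f y) = fun x => (∫ y in Iic 0, f y) + ∫ y in 0..x, f y := by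
    ext x
    rw [← intervalIntegral.integral_Iic_sub_Iic hfi.integrableOn hfi.integrableOn,
      add_sub_cancel]
  rw [hsplit]
  exact (hf.integral_hasStrictDerivAt 0 x).hasDerivAt.const_add _

theorem Phi_eq_integral_gaussianPDFReal (x : ℝ) :
    Phi x = ∫ y in Iic x, gaussianPDFReal 0 1 y := by
  simp [Phi, gaussianPDFReal, integral_const_mul]

theorem Phi_eq_cdf : Phi = cdf (gaussianReal 0 1) := by
  ext x
  rw [Phi_eq_integral_gaussianPDFReal, cdf_eq_real, measureReal_def,
    gaussianReal_apply_eq_integral _ one_ne_zero, ENNReal.toReal_ofReal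
      (setIntegral_nonneg measurableSet_Iic fun y _ => gaussianPDFReal_nonneg 0 1 y)]

theorem Phi_pos (x : ℝ) : 0 < Phi x := by
  rw [Phi_eq_cdf, cdf_eq_real]
  refine ENNReal.toReal_pos (fun h => ?_) (measure_ne_top _ _)
  simpa using gaussianReal_absolutelyContinuous' 0 one_ne_zero h

theorem tendsto_Phi_atTop : Tendsto Phi atTop (𝓝 1) := Phi_eq_cdf ▸ tendsto_cdf_atTop _

theorem tendsto_Phi_atBot : Tendsto Phi atBot (𝓝 0) := Phi_eq_cdf ▸ tendsto_cdf_atBot _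

theorem hasDerivAt_Phi (x : ℝ) : HasDerivAt Phi (gaussianPDFReal 0 1 x) x := by
  rw [funext Phi_eq_integral_gaussianPDFReal]
  exact hasDerivAt_integral_Iic (by unfold gaussianPDFReal; fun_prop)
    (integrable_gaussianPDFReal 0 1) x

theorem gaussianPDFReal_zero_one (x : ℝ) :
    gaussianPDFReal 0 1 x = (√(2 * π))⁻¹ * exp (-x ^ 2 / 2) := by
  simp [gaussianPDFReal]

theorem gaussianPDFReal_zero_one_neg (x : ℝ) :
    gaussianPDFReal 0 1 (-x) = gaussianPDFReal 0 1 x := by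
  simp only [gaussianPDFReal_zero_one, neg_sq]

theorem exp_mul_gaussianPDFReal_eq {s : ℝ} (hs : 0 < s) (ℓ : ℝ) :
    exp (ℓ ^ 2 * (s - 1) / 2) * gaussianPDFReal 0 1 (ℓ * (1 / (2 * √s) - √s)) =
      gaussianPDFReal 0 1 (ℓ / (2 * √s)) := by
  have ht : √s ≠ 0 := (sqrt_pos.2 hs).ne'
  simp only [gaussianPDFReal_zero_one, mul_left_comm (exp _), ← exp_add]
  congr 2
  field_simp
  rw [sq_sqrt hs.le]
  ring

theorem hasDerivAt_J {s : ℝ} (hs : 0 < s) (ℓ : ℝ) :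
    HasDerivAt (J s) ((s - 1) * ℓ * exp (ℓ ^ 2 * (s - 1) / 2) *
      Phi (ℓ * (1 / (2 * √s) - √s)) - √s * gaussianPDFReal 0 1 (ℓ / (2 * √s))) ℓ := by
  set t := √s
  have h1 := (hasDerivAt_Phi (-ℓ / (2 * t))).comp ℓ ((hasDerivAt_id ℓ).neg.div_const (2 * t))
  have h2 := (((hasDerivAt_pow 2 ℓ).mul_const (s - 1)).div_const 2).exp
  have h3 := (hasDerivAt_Phi (ℓ * (1 / (2 * t) - t))).comp ℓ
    ((hasDerivAt_id ℓ).mul_const (1 / (2 * t) - t))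
  refine (h1.add (h2.mul h3)).congr_deriv ?_
  rw [neg_div, gaussianPDFReal_zero_one_neg, ← exp_mul_gaussianPDFReal_eq hs]
  simp only [one_div, mul_inv_rev, Nat.cast_ofNat, Nat.add_one_sub_one, pow_one, id_eq,
    Function.comp_apply, one_mul]
  ring

theorem J_strictAntiOn {s : ℝ} (hs : 0 < s) (hs1 : s < 1) : StrictAntiOn (J s) (Ioi 0) := by
  refine strictAntiOn_of_hasDerivWithinAt_neg (convex_Ioi 0)
    (fun ℓ _ => (hasDerivAt_J hs ℓ).continuousAt.continuousWithinAt)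
    (fun ℓ _ => (hasDerivAt_J hs ℓ).hasDerivWithinAt) fun ℓ hℓ => ?_
  rw [interior_Ioi] at hℓ
  have hdecay : (s - 1) * ℓ * exp (ℓ ^ 2 * (s - 1) / 2) * Phi (ℓ * (1 / (2 * √s) - √s)) < 0 :=
    mul_neg_of_neg_of_pos (mul_neg_of_neg_of_pos (mul_neg_of_neg_of_pos (by linarith) hℓ)
      (exp_pos _)) (Phi_pos _)
  have := mul_pos (sqrt_pos.2 hs) (gaussianPDFReal_pos 0 1 (ℓ / (2 * √s)) one_ne_zero)
  linarith

theorem tendsto_inv_two_mul_sqrt_nhdsGT_zero :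
    Tendsto (fun s : ℝ => 1 / (2 * √s)) (𝓝[>] 0) atTop := by
  simp only [one_div]
  refine Tendsto.inv_tendsto_nhdsGT_zero (tendsto_nhdsWithin_iff.2 ⟨?_, ?_⟩)
  · simpa using ((continuous_sqrt.tendsto 0).const_mul 2).mono_left nhdsWithin_le_nhds
  · filter_upwards [self_mem_nhdsWithin] with s hs using by simpa using hs

theorem tendsto_J_nhdsGT_zero {ℓ : ℝ} (hℓ : 0 < ℓ) :
    Tendsto (fun s => J s ℓ) (𝓝[>] 0) (𝓝 (exp (-ℓ ^ 2 / 2))) := by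
  have hu := tendsto_inv_two_mul_sqrt_nhdsGT_zero
  have hsqrt : Tendsto (fun s : ℝ => √s) (𝓝[>] 0) (𝓝 0) := by
    simpa using (continuous_sqrt.tendsto 0).mono_left nhdsWithin_le_nhds
  have hexp : Tendsto (fun s : ℝ => exp (ℓ ^ 2 * (s - 1) / 2)) (𝓝[>] 0)
      (𝓝 (exp (-ℓ ^ 2 / 2))) := by
    refine ((by fun_prop : Continuous fun s : ℝ => exp (ℓ ^ 2 * (s - 1) / 2)).tendsto' 0 _
      ?_).mono_left nhdsWithin_le_nhds
    ring_nf
  have hbot : Tendsto (fun s : ℝ => -ℓ / (2 * √s)) (𝓝[>] 0) atBot := by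
    refine (tendsto_neg_atTop_atBot.comp (hu.const_mul_atTop hℓ)).congr fun s => ?_
    simp only [Function.comp, mul_one_div, neg_div]
  have htop : Tendsto (fun s : ℝ => ℓ * (1 / (2 * √s) - √s)) (𝓝[>] 0) atTop :=
    (hu.atTop_add hsqrt.neg).const_mul_atTop hℓ
  have := (tendsto_Phi_atBot.comp hbot).add (hexp.mul (tendsto_Phi_atTop.comp htop))
  rwa [zero_add, mul_one] at this

theorem exp_neg_sq_div_two_strictAntiOn : StrictAntiOn (fun y : ℝ => exp (-y ^ 2 / 2)) (Ici 0) :=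
  fun _ hx _ hy hxy => exp_lt_exp.2 (by nlinarith [mem_Ici.1 hx, mem_Ici.1 hy])

theorem exp_neg_sq_div_two_sqrt_neg_two_mul_log {α : ℝ} (hα₀ : 0 < α) (hα₁ : α ≤ 1) :
    exp (-√(-2 * log α) ^ 2 / 2) = α := by
  rw [sq_sqrt (by nlinarith [log_nonpos hα₀.le hα₁]), neg_mul, neg_neg,
    mul_div_cancel_left₀ _ two_ne_zero, exp_log hα₀]

/-- If `ℓα(s)` is the (unique) positive root of `J(s,·) = α`, then
`ℓα(s) → √(−2 ln α)` as `s → 0⁺`. -/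
theorem lalpha_tendsto_zero (α : ℝ) (hα : α ∈ Set.Ioo (0 : ℝ) 1)
    (ℓα : ℝ → ℝ) (hroot : ∀ s : ℝ, 0 < s → 0 < ℓα s ∧ J s (ℓα s) = α) :
    Tendsto ℓα (𝓝[>] 0) (𝓝 (Real.sqrt (-2 * Real.log α))) := by
  have hα_eq := exp_neg_sq_div_two_sqrt_neg_two_mul_log hα.1 hα.2.le
  have hg := exp_neg_sq_div_two_strictAntiOn
  refine tendsto_root_of_strictAntiOn (sqrt_nonneg _) ?_ (fun ℓ => tendsto_J_nhdsGT_zero)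
    (eventually_nhdsWithin_of_forall hroot) (fun y hy => ?_) (fun y hy => ?_)
  · filter_upwards [Ioo_mem_nhdsGT one_pos] with s hs using J_strictAntiOn hs.1 hs.2
  · exact hα_eq ▸ hg hy.1.le (sqrt_nonneg _) hy.2
  · exact hα_eq ▸ hg (sqrt_nonneg _) ((sqrt_nonneg _).trans hy.le) hy
end

section
/- The function ψ(x) = x√(2/π) e^{−x²/8} − x² Φ(−x/2) admits a unique global maximizer x* on [0,∞); moreover ψ'(0) > 0, ψ'(x) < 0 for large x, and x ↦ e^{x²/8} ψ'(x) is strictly decreasing on (0,∞). -/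
open Real Set Filter Topology

noncomputable def psi (x : ℝ) : ℝ :=
  x * Real.sqrt (2 / Real.pi) * Real.exp (-x ^ 2 / 8) - x ^ 2 * Phi (-x / 2)

/-!
Write `G(x) = e^{x²/8} ψ'(x) = √(2/π) − 2x e^{x²/8} Φ(−x/2)`. The Mills-ratio bound
`Φ(−t) > t/(1+t²) · e^{−t²/2}/√(2π)`, valid for every real `t`, makes
`G'(x) = x/√(2π) − 2(1 + x²/4) e^{x²/8} Φ(−x/2)` negative everywhere and gives `G(2) < 0`.
Since `G(0) = √(2/π) > 0`, `G` has a single zero `z ∈ (0, 2)`, and `ψ` increases up to `z` and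
decreases after it.
-/

open MeasureTheory

theorem existsUnique_isMaxOn_Ici {α β : Type*} [LinearOrder α] [Preorder β] {f : α → β}
    {a z : α} (haz : a ≤ z) (hmono : StrictMonoOn f (Icc a z)) (hanti : StrictAntiOn f (Ici z)) :
    ∃! x, x ∈ Ici a ∧ IsMaxOn f (Ici a) x := by
  have hlt : ∀ y ∈ Ici a, y ≠ z → f y < f z := fun y hy hne => by
    rcases hne.lt_or_gt with h | h
    · exact hmono ⟨hy, h.le⟩ ⟨haz, le_rfl⟩ h
    · exact hanti self_mem_Ici h.le h
  refine ⟨z, ⟨haz, fun y hy => ?_⟩, fun y ⟨hy, hmax⟩ => ?_⟩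
  · rcases eq_or_ne y z with rfl | hne
    · exact le_rfl
    · exact (hlt y hy hne).le
  · by_contra hne
    exact (hlt y hy hne).not_ge (hmax haz)

lemma integrable_exp_neg_sq_div_two : Integrable fun y : ℝ => exp (-y ^ 2 / 2) := by
  convert integrable_exp_neg_mul_sq (b := 1 / 2) (by norm_num) using 1
  ext y
  ring_nf

lemma hasDerivAt_Phi_s13 (x : ℝ) :
    HasDerivAt Phi ((√(2 * π))⁻¹ * exp (-x ^ 2 / 2)) x := by
  have hint := integrable_exp_neg_sq_div_two
  have hcont : Continuous fun y : ℝ => exp (-y ^ 2 / 2) := by fun_prop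
  have hsplit : Phi = fun u => (√(2 * π))⁻¹ *
      ((∫ y in Iic 0, exp (-y ^ 2 / 2)) + ∫ y in (0 : ℝ)..u, exp (-y ^ 2 / 2)) := by
    funext u
    rw [Phi, ← intervalIntegral.integral_Iic_sub_Iic hint.integrableOn hint.integrableOn]
    ring
  rw [hsplit]
  exact ((intervalIntegral.integral_hasDerivAt_right hint.intervalIntegrable
    hcont.aestronglyMeasurable.stronglyMeasurableAtFilter hcont.continuousAt).const_add _).const_mul
    _

lemma hasDerivAt_div_one_add_sq_mul_exp (t : ℝ) :
    HasDerivAt (fun y : ℝ => y / (1 + y ^ 2) * exp (-y ^ 2 / 2))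
      (2 * exp (-t ^ 2 / 2) / (1 + t ^ 2) ^ 2 - exp (-t ^ 2 / 2)) t := by
  have hne : 1 + t ^ 2 ≠ 0 := by positivity
  have hexp : HasDerivAt (fun y : ℝ => exp (-y ^ 2 / 2)) (exp (-t ^ 2 / 2) * (-t)) t := by
    have h : HasDerivAt (fun y : ℝ => -y ^ 2 / 2) (-t) t :=
      ((hasDerivAt_pow 2 t).neg.div_const 2).congr_deriv (by ring)
    exact h.exp
  refine (((hasDerivAt_id t).div ((hasDerivAt_pow 2 t).const_add 1) hne).mul hexp).congr_deriv ?_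
  simp only [Pi.div_apply, id_eq]
  field_simp
  ring

lemma tendsto_div_one_add_sq_mul_exp :
    Tendsto (fun y : ℝ => y / (1 + y ^ 2) * exp (-y ^ 2 / 2)) atTop (𝓝 0) := by
  have hexp : Tendsto (fun y : ℝ => exp (-y ^ 2 / 2)) atTop (𝓝 0) := by
    refine Real.tendsto_exp_atBot.comp (Tendsto.atBot_div_const (by norm_num) ?_)
    exact tendsto_neg_atTop_atBot.comp (tendsto_pow_atTop two_ne_zero)
  refine squeeze_zero_norm (fun y => ?_) hexp
  have hy : 0 < 1 + y ^ 2 := by positivity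
  rw [norm_mul, Real.norm_of_nonneg (exp_pos _).le, norm_div, Real.norm_of_nonneg hy.le]
  refine mul_le_of_le_one_left (exp_pos _).le ((div_le_one hy).2 ?_)
  rw [Real.norm_eq_abs]
  nlinarith [sq_abs y, sq_nonneg (|y| - 1)]

lemma integrable_two_mul_exp_div_one_add_sq_sq :
    Integrable fun y : ℝ => 2 * exp (-y ^ 2 / 2) / (1 + y ^ 2) ^ 2 := by
  refine (integrable_exp_neg_sq_div_two.const_mul 2).mono'
    ((continuous_const.mul (by fun_prop)).div (by fun_prop)
      fun y => by positivity).aestronglyMeasurable (.of_forall fun y => ?_)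
  rw [Real.norm_of_nonneg (by positivity)]
  exact div_le_self (by positivity) (one_le_pow₀ (by nlinarith))

theorem div_one_add_sq_mul_exp_lt_integral_Ioi (t : ℝ) :
    t / (1 + t ^ 2) * exp (-t ^ 2 / 2) < ∫ y in Ioi t, exp (-y ^ 2 / 2) := by
  have hrem := integrable_two_mul_exp_div_one_add_sq_sq
  have hftc := integral_Ioi_of_hasDerivAt_of_tendsto' (a := t)
    (fun y _ => hasDerivAt_div_one_add_sq_mul_exp y)
    (hrem.sub integrable_exp_neg_sq_div_two).integrableOn tendsto_div_one_add_sq_mul_exp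
  rw [integral_sub hrem.integrableOn integrable_exp_neg_sq_div_two.integrableOn] at hftc
  have hpos : 0 < ∫ y in Ioi t, 2 * exp (-y ^ 2 / 2) / (1 + y ^ 2) ^ 2 := by
    rw [setIntegral_pos_iff_support_of_nonneg_ae (.of_forall fun y => by positivity)
      hrem.integrableOn]
    have : Function.support (fun y : ℝ => 2 * exp (-y ^ 2 / 2) / (1 + y ^ 2) ^ 2) = univ :=
      Function.support_eq_univ fun y => by positivity
    simp [this]
  linarith

lemma Phi_neg_gt (t : ℝ) :
    (√(2 * π))⁻¹ * (t / (1 + t ^ 2) * exp (-t ^ 2 / 2)) < Phi (-t) := by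
  have hreflect : ∫ y in Iic (-t), exp (-y ^ 2 / 2) = ∫ y in Ioi t, exp (-y ^ 2 / 2) := by
    rw [← integral_comp_neg_Ioi]
    simp only [neg_sq]
  rw [Phi, hreflect]
  exact mul_lt_mul_of_pos_left (div_one_add_sq_mul_exp_lt_integral_Ioi t) (by positivity)

lemma exp_mul_Phi_neg_half_gt (x : ℝ) :
    (√(2 * π))⁻¹ * (2 * x / (4 + x ^ 2)) < exp (x ^ 2 / 8) * Phi (-x / 2) := by
  have h := mul_lt_mul_of_pos_left (Phi_neg_gt (x / 2)) (exp_pos (x ^ 2 / 8))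
  have hexp : exp (x ^ 2 / 8) * exp (-(x / 2) ^ 2 / 2) = 1 := by
    rw [← exp_add]
    ring_nf
    exact exp_zero
  have hfrac : 2 * x / (4 + x ^ 2) = x / 2 / (1 + (x / 2) ^ 2) := by
    field_simp
    ring
  rw [neg_div, hfrac]
  refine lt_of_eq_of_lt ?_ h
  linear_combination (-((√(2 * π))⁻¹ * (x / 2 / (1 + (x / 2) ^ 2)))) * hexp

lemma sqrt_two_div_pi : √(2 / π) = 2 * (√(2 * π))⁻¹ := by
  rw [← sqrt_inv, ← sqrt_sq (zero_le_two : (0 : ℝ) ≤ 2), ← sqrt_mul (by norm_num)]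
  congr 1
  field_simp
  ring

lemma hasDerivAt_Phi_neg_half (x : ℝ) :
    HasDerivAt (fun y => Phi (-y / 2)) (-((√(2 * π))⁻¹ * exp (-x ^ 2 / 8)) / 2) x := by
  refine ((hasDerivAt_Phi_s13 (-x / 2)).comp x ((hasDerivAt_neg x).div_const 2)).congr_deriv ?_
  rw [show -(-x / 2) ^ 2 / 2 = -x ^ 2 / 8 by ring]
  ring

lemma hasDerivAt_psi (x : ℝ) :
    HasDerivAt psi (√(2 / π) * exp (-x ^ 2 / 8) - 2 * x * Phi (-x / 2)) x := by
  have hexp : HasDerivAt (fun y : ℝ => exp (-y ^ 2 / 8)) (exp (-x ^ 2 / 8) * (-x / 4)) x :=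
    (((hasDerivAt_pow 2 x).neg.div_const 8).congr_deriv (by ring)).exp
  refine ((((hasDerivAt_id x).mul_const _).mul hexp).sub
    ((hasDerivAt_pow 2 x).mul (hasDerivAt_Phi_neg_half x))).congr_deriv ?_
  rw [sqrt_two_div_pi]
  simp only [id_eq]
  ring

lemma exp_mul_exp_neg (x : ℝ) : exp (x ^ 2 / 8) * exp (-x ^ 2 / 8) = 1 := by
  rw [← exp_add, neg_div, add_neg_cancel, exp_zero]

noncomputable def psiDerivScaled (x : ℝ) : ℝ :=
  √(2 / π) - 2 * x * exp (x ^ 2 / 8) * Phi (-x / 2)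

lemma exp_mul_deriv_psi (x : ℝ) : exp (x ^ 2 / 8) * deriv psi x = psiDerivScaled x := by
  rw [(hasDerivAt_psi x).deriv, psiDerivScaled]
  linear_combination √(2 / π) * exp_mul_exp_neg x

lemma deriv_psi (x : ℝ) : deriv psi x = exp (-x ^ 2 / 8) * psiDerivScaled x := by
  rw [← exp_mul_deriv_psi, ← mul_assoc, mul_comm (exp _), exp_mul_exp_neg, one_mul]

lemma hasDerivAt_psiDerivScaled (x : ℝ) :
    HasDerivAt psiDerivScaled
      (x * (√(2 * π))⁻¹ - (4 + x ^ 2) / 2 * (exp (x ^ 2 / 8) * Phi (-x / 2))) x := by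
  have hexp : HasDerivAt (fun y : ℝ => exp (y ^ 2 / 8)) (exp (x ^ 2 / 8) * (x / 4)) x :=
    (((hasDerivAt_pow 2 x).div_const 8).congr_deriv (by ring)).exp
  refine ((((hasDerivAt_id x).const_mul 2).mul hexp).mul
    (hasDerivAt_Phi_neg_half x)).const_sub _ |>.congr_deriv ?_
  simp only [Pi.mul_apply, id_eq]
  linear_combination x * (√(2 * π))⁻¹ * exp_mul_exp_neg x

lemma strictAnti_psiDerivScaled : StrictAnti psiDerivScaled := by
  refine strictAnti_of_deriv_neg fun x => ?_
  rw [(hasDerivAt_psiDerivScaled x).deriv, sub_neg]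
  calc x * (√(2 * π))⁻¹ = (4 + x ^ 2) / 2 * ((√(2 * π))⁻¹ * (2 * x / (4 + x ^ 2))) := by
        field_simp
    _ < (4 + x ^ 2) / 2 * (exp (x ^ 2 / 8) * Phi (-x / 2)) :=
        mul_lt_mul_of_pos_left (exp_mul_Phi_neg_half_gt x) (by positivity)

lemma continuous_psiDerivScaled : Continuous psiDerivScaled :=
  Differentiable.continuous fun x => (hasDerivAt_psiDerivScaled x).differentiableAt

lemma psiDerivScaled_zero_pos : 0 < psiDerivScaled 0 := by
  rw [psiDerivScaled, mul_zero, zero_mul, zero_mul, sub_zero]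
  positivity

lemma psiDerivScaled_two_neg : psiDerivScaled 2 < 0 := by
  have h := exp_mul_Phi_neg_half_gt 2
  rw [psiDerivScaled, sqrt_two_div_pi]
  norm_num at h ⊢
  linarith

lemma continuous_psi : Continuous psi :=
  Differentiable.continuous fun x => (hasDerivAt_psi x).differentiableAt

lemma strictMonoOn_psi_Iic {z : ℝ} (hz : psiDerivScaled z = 0) : StrictMonoOn psi (Iic z) := by
  refine strictMonoOn_of_deriv_pos (convex_Iic z) continuous_psi.continuousOn fun x hx => ?_
  rw [interior_Iic] at hx
  rw [deriv_psi]
  exact mul_pos (exp_pos _) (hz ▸ strictAnti_psiDerivScaled hx)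

lemma strictAntiOn_psi_Ici {z : ℝ} (hz : psiDerivScaled z = 0) : StrictAntiOn psi (Ici z) := by
  refine strictAntiOn_of_deriv_neg (convex_Ici z) continuous_psi.continuousOn fun x hx => ?_
  rw [interior_Ici] at hx
  rw [deriv_psi]
  exact mul_neg_of_pos_of_neg (exp_pos _) (hz ▸ strictAnti_psiDerivScaled hx)

/-- `ψ` admits a unique global maximizer on `[0,∞)`; moreover `ψ'(0) > 0`, `ψ' < 0` for large `x`,
and `x ↦ e^{x²/8} ψ'(x)` is strictly decreasing on `(0,∞)`. -/
theorem psi_unique_max :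
    (∃! x : ℝ, x ∈ Set.Ici (0 : ℝ) ∧ IsMaxOn psi (Set.Ici 0) x) ∧
    0 < deriv psi 0 ∧
    (∀ᶠ x in atTop, deriv psi x < 0) ∧
    StrictAntiOn (fun x => Real.exp (x ^ 2 / 8) * deriv psi x) (Set.Ioi 0) := by
  obtain ⟨z, hz, hGz⟩ : ∃ z ∈ Ioo 0 2, psiDerivScaled z = 0 :=
    intermediate_value_Ioo' zero_le_two continuous_psiDerivScaled.continuousOn
      ⟨psiDerivScaled_two_neg, psiDerivScaled_zero_pos⟩
  refine ⟨existsUnique_isMaxOn_Ici hz.1.le ((strictMonoOn_psi_Iic hGz).mono Icc_subset_Iic_self)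
    (strictAntiOn_psi_Ici hGz), ?_, ?_, ?_⟩
  · rw [deriv_psi, pow_two, mul_zero, neg_zero, zero_div, exp_zero, one_mul]
    exact psiDerivScaled_zero_pos
  · filter_upwards [eventually_ge_atTop 2] with x hx
    rw [deriv_psi]
    exact mul_neg_of_pos_of_neg (exp_pos _)
      ((strictAnti_psiDerivScaled.antitone hx).trans_lt psiDerivScaled_two_neg)
  · simp only [exp_mul_deriv_psi]
    exact strictAnti_psiDerivScaled.strictAntiOn _
end
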